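/- arXiv:1911.07485 — 5 statements merged into one kernel-verified Lean document; each statement's English description precedes it below -/
import Mathlib

section
/- If R is a recovery set for some coordinate i of a linear code C over F_q (with d(C⊥) defined as the minimum distance of the dual code), then #R ≥ d(C⊥) − 1. Consequently, the locality r of a locally recoverable code C satisfies r ≥ d(C⊥) − 1. -/
/-!
If `R` recovers coordinate `i`, then the functional `x ↦ x i` on `C` vanishes on the common kernel
of the functionals `x ↦ x j`, `j ∈ R`, so it is a linear combination `∑ c j x j` of them. The
vector `e_i - ∑ c j e_j` is then a nonzero dual codeword supported on `{i} ∪ R`, whence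
`d(C⊥) ≤ #R + 1`.
-/

/-- Hamming weight of a vector. -/
def wt {F : Type*} [Field F] {n : ℕ} [DecidableEq F] (x : Fin n → F) : ℕ :=
  (Finset.univ.filter fun i => x i ≠ 0).card

/-- Minimum weight (= minimum distance, for linear codes) of a set of vectors. -/
noncomputable def minWt {F : Type*} [Field F] {n : ℕ} [DecidableEq F] (S : Set (Fin n → F)) : ℕ :=
  sInf { w | ∃ x ∈ S, x ≠ 0 ∧ wt x = w }

/-- Dual code of a linear code. -/
def dualCode {F : Type*} [Field F] {n : ℕ} (C : Submodule F (Fin n → F)) :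
    Submodule F (Fin n → F) where
  carrier := { w | ∀ x ∈ C, ∑ i, x i * w i = 0 }
  add_mem' := by
    intro a b ha hb x hx
    have h1 := ha x hx
    have h2 := hb x hx
    simp only [Set.mem_setOf_eq] at *
    simp [Pi.add_apply, mul_add, Finset.sum_add_distrib, h1, h2]
  zero_mem' := by intro x hx; simp
  smul_mem' := by
    intro c w hw x hx
    have h := hw x hx
    simp only [Set.mem_setOf_eq] at *
    have : ∑ i, x i * (c • w) i = c * ∑ i, x i * w i := by
      rw [Finset.mul_sum]
      exact Finset.sum_congr rfl (by intro i _; simp [smul_eq_mul]; ring)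
    rw [this, h, mul_zero]

/-- `R` is a recovery set for coordinate `i` of the code `C`: the value `x i` of any codeword
is determined by the values `x j`, `j ∈ R` (equivalently, the `i`-th column of a generator
matrix lies in the span of the columns indexed by `R`). -/
def IsRecoverySet {F : Type*} [Field F] {n : ℕ} (C : Submodule F (Fin n → F)) (i : Fin n)
    (R : Finset (Fin n)) : Prop :=
  ∀ x ∈ C, (∀ j ∈ R, x j = 0) → x i = 0

open LinearMap Finset

section
variable {F : Type*} [Field F] {n : ℕ}

theorem IsRecoverySet.exists_eq_sum {C : Submodule F (Fin n → F)} {i : Fin n}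
    {R : Finset (Fin n)} (hR : IsRecoverySet C i R) :
    ∃ c : R → F, ∀ x ∈ C, x i = ∑ j : R, c j * x j := by
  have hker : ⨅ j : R, ker ((proj (j : Fin n)).comp C.subtype) ≤ ker ((proj i).comp C.subtype) :=
    fun x hx => hR x x.2 fun j hj => by
      simpa using (Submodule.mem_iInf _).1 hx ⟨j, hj⟩
  obtain ⟨c, hc⟩ :=
    (Submodule.mem_span_range_iff_exists_fun F).1 (mem_span_of_iInf_ker_le_ker hker)
  refine ⟨c, fun x hx => ?_⟩
  simpa using (LinearMap.congr_fun hc ⟨x, hx⟩).symm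

theorem IsRecoverySet.exists_mem_dualCode {C : Submodule F (Fin n → F)} {i : Fin n}
    {R : Finset (Fin n)} (hiR : i ∉ R) (hR : IsRecoverySet C i R) :
    ∃ w ∈ dualCode C, w ≠ 0 ∧ ∀ k, w k ≠ 0 → k ∈ insert i R := by
  obtain ⟨c, hc⟩ := hR.exists_eq_sum
  set v : Fin n → F := ∑ j : R, c j • Pi.single (j : Fin n) 1
  have hv : ∀ k ∉ R, v k = 0 := fun k hk => by
    refine (Finset.sum_apply k _ _).trans (sum_eq_zero fun j _ => ?_)
    simp [show k ≠ j from fun h => hk (h ▸ j.2)]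
  refine ⟨Pi.single i 1 - v, fun x hx => ?_, fun hw => ?_, fun k hk => ?_⟩
  · simp only [v, Pi.sub_apply, Finset.sum_apply, Pi.smul_apply, mul_sub, sum_sub_distrib, mul_sum]
    rw [sum_comm]
    simp [Pi.single_apply, hc x hx, mul_comm]
  · simpa [hv i hiR] using congrFun hw i
  · by_contra hkiR
    rw [mem_insert, not_or] at hkiR
    simp [hv k hkiR.2, hkiR.1] at hk

variable [DecidableEq F]

theorem wt_le_card_of_support_subset {x : Fin n → F} {s : Finset (Fin n)}
    (hx : ∀ k, x k ≠ 0 → k ∈ s) : wt x ≤ s.card :=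
  card_le_card fun k hk => hx k (mem_filter.1 hk).2

theorem minWt_le_wt {S : Set (Fin n → F)} {x : Fin n → F} (hxS : x ∈ S) (hx : x ≠ 0) :
    minWt S ≤ wt x :=
  Nat.sInf_le ⟨x, hxS, hx, rfl⟩

theorem IsRecoverySet.minWt_dualCode_le_card_add_one {C : Submodule F (Fin n → F)} {i : Fin n}
    {R : Finset (Fin n)} (hiR : i ∉ R) (hR : IsRecoverySet C i R) :
    minWt (dualCode C : Set (Fin n → F)) ≤ R.card + 1 := by
  obtain ⟨w, hwC, hw, hsupp⟩ := hR.exists_mem_dualCode hiR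
  calc minWt (dualCode C : Set (Fin n → F)) ≤ wt w := minWt_le_wt hwC hw
    _ ≤ (insert i R).card := wt_le_card_of_support_subset hsupp
    _ ≤ R.card + 1 := card_insert_le i R

end

/-- A recovery set `R` for a coordinate `i` of a linear code `C`
satisfies `#R ≥ d(C⊥) − 1`; consequently, the locality `r` of a locally recoverable code
satisfies `r ≥ d(C⊥) − 1`. -/
theorem stmt1 {F : Type*} [Field F] [DecidableEq F] {n : ℕ} (hn : 0 < n)
    (C : Submodule F (Fin n → F)) :
    (∀ (i : Fin n) (R : Finset (Fin n)), i ∉ R → IsRecoverySet C i R →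
      minWt (dualCode C : Set (Fin n → F)) - 1 ≤ R.card) ∧
    (∀ r : ℕ, (∀ i : Fin n, ∃ R : Finset (Fin n), i ∉ R ∧ R.card ≤ r ∧ IsRecoverySet C i R) →
      minWt (dualCode C : Set (Fin n → F)) - 1 ≤ r) := by
  have hcard : ∀ (i : Fin n) (R : Finset (Fin n)), i ∉ R → IsRecoverySet C i R →
      minWt (dualCode C : Set (Fin n → F)) - 1 ≤ R.card := fun i R hiR hR =>
    Nat.sub_le_of_le_add (hR.minWt_dualCode_le_card_add_one hiR)
  refine ⟨hcard, fun r hr => ?_⟩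
  obtain ⟨R, hiR, hRr, hR⟩ := hr ⟨0, hn⟩
  exact (hcard _ R hiR hR).trans hRr
end

section
/- For an [n,k,d] linear code C over F_q and 1 ≤ t ≤ d−1, the t-locality r_t of C satisfies r_t ≥ d_t(C⊥) − 1, where d_t(C⊥) is the t-th generalized Hamming weight of the dual code C⊥. -/
/-- Minimum distance of the punctured code `C[R]`
(the minimum weight of a nonzero projection onto the coordinates in `R`). -/
noncomputable def punctMinDist {F : Type*} [Field F] {n : ℕ} [DecidableEq F]
    (C : Submodule F (Fin n → F)) (R : Finset (Fin n)) : ℕ :=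
  sInf { w | ∃ x ∈ C, (∃ i ∈ R, x i ≠ 0) ∧ (R.filter fun i => x i ≠ 0).card = w }

/-- `t`-th generalized Hamming weight of a linear code `D`. -/
noncomputable def ghw {F : Type*} [Field F] {n : ℕ} (t : ℕ) (D : Submodule F (Fin n → F)) : ℕ :=
  sInf { m | ∃ E : Submodule F (Fin n → F), E ≤ D ∧ Module.finrank F E = t ∧
    {i : Fin n | ∃ x ∈ E, x i ≠ 0}.ncard = m }

/-- Any finite-dimensional submodule contains a submodule of any smaller finrank. -/
lemma exists_submodule_finrank_eq_aux {F V : Type*} [Field F] [AddCommGroup V] [Module F V]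
    (W : Submodule F V) [FiniteDimensional F W] (t : ℕ) (h : t ≤ Module.finrank F W) :
    ∃ K : Submodule F V, K ≤ W ∧ Module.finrank F K = t := by
  let b := Module.finBasis F W
  let v : Fin t → V := fun i => (b (Fin.castLE h i) : V)
  have hli : LinearIndependent F v := by
    have h1 : LinearIndependent F (fun i : Fin (Module.finrank F W) => ((b i : W) : V)) :=
      b.linearIndependent.map' W.subtype W.ker_subtype
    exact h1.comp (Fin.castLE h) (Fin.castLE_injective h)
  refine ⟨Submodule.span F (Set.range v), ?_, ?_⟩
  · rw [Submodule.span_le]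
    rintro x ⟨i, rfl⟩
    exact (b (Fin.castLE h i)).2
  · rw [finrank_span_eq_card hli, Fintype.card_fin]

/-- For an `[n,k,d]` code `C` and `1 ≤ t ≤ d − 1`, the `t`-locality `r_t`
satisfies `r_t ≥ d_t(C⊥) − 1`: any `ρ` such that every coordinate `i` lies in a set `R`
with `#R ≤ ρ + 1` and `d(C[R]) ≥ t + 1` satisfies `ρ ≥ d_t(C⊥) − 1`. -/
theorem stmt2 {F : Type*} [Field F] [DecidableEq F] {n : ℕ}
    (C : Submodule F (Fin n → F)) (t ρ : ℕ) (ht : 1 ≤ t)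
    (htd : t ≤ minWt (C : Set (Fin n → F)) - 1)
    (hρ : ∀ i : Fin n, ∃ R : Finset (Fin n), i ∈ R ∧ R.card ≤ ρ + 1 ∧
      t + 1 ≤ punctMinDist C R) :
    ghw t (dualCode C) - 1 ≤ ρ := by
  classical
  rcases Nat.eq_zero_or_pos n with hn | hn
  · -- degenerate case n = 0 : ghw is sInf of the empty set, hence 0
    subst hn
    have hempty : {m | ∃ E : Submodule F (Fin 0 → F), E ≤ dualCode C ∧
        Module.finrank F E = t ∧ {i : Fin 0 | ∃ x ∈ E, x i ≠ 0}.ncard = m} = ∅ := by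
      ext m
      simp only [Set.mem_setOf_eq, Set.mem_empty_iff_false, iff_false]
      rintro ⟨E, -, hfr, -⟩
      have hs : Subsingleton (Fin 0 → F) := ⟨fun a b => funext fun i => i.elim0⟩
      have hsE : Subsingleton E := ⟨fun a b => Subtype.ext (Subsingleton.elim _ _)⟩
      have : Module.finrank F E = 0 := Module.finrank_zero_of_subsingleton
      omega
    unfold ghw
    rw [hempty, Nat.sInf_empty]
    omega
  obtain ⟨R, hiR, hcard, hdist⟩ := hρ ⟨0, hn⟩
  unfold punctMinDist at hdist
  -- the defining set for punctMinDist is nonempty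
  have hne : {w | ∃ x ∈ C, (∃ i ∈ R, x i ≠ 0) ∧ (R.filter fun i => x i ≠ 0).card = w}.Nonempty := by
    by_contra h
    rw [Set.not_nonempty_iff_eq_empty] at h
    rw [h, Nat.sInf_empty] at hdist
    exact Nat.not_succ_le_zero t hdist
  have htR : t + 1 ≤ R.card := by
    obtain ⟨w, hw⟩ := hne
    have h1 := Nat.sInf_le hw
    obtain ⟨x, -, -, hwc⟩ := hw
    have h2 : (R.filter fun i => x i ≠ 0).card ≤ R.card := Finset.card_filter_le _ _
    exact le_trans hdist (h1.trans (hwc ▸ h2))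
  -- a codeword with at most t nonzero coordinates in R vanishes on R
  have hvan : ∀ x ∈ C, (R.filter fun i => x i ≠ 0).card ≤ t → ∀ i ∈ R, x i = 0 := by
    intro x hxC hle i hiR' 
    by_contra hxi
    have hmem : (R.filter fun j => x j ≠ 0).card ∈
        {w | ∃ x ∈ C, (∃ i ∈ R, x i ≠ 0) ∧ (R.filter fun i => x i ≠ 0).card = w} :=
      ⟨x, hxC, ⟨i, hiR', hxi⟩, rfl⟩
    have h3 := Nat.sInf_le hmem
    exact Nat.not_succ_le_self t (hdist.trans (h3.trans hle))
  clear hdist hne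
  obtain ⟨S, hSR, hScard⟩ := Finset.exists_subset_card_eq (s := R) (n := t) (le_trans (Nat.le_succ t) htR)
  -- the projection onto R
  let P : (Fin n → F) →ₗ[F] (Fin n → F) :=
    { toFun := fun w i => if i ∈ R then w i else 0
      map_add' := by intro a b; funext i; by_cases h : i ∈ R <;> simp [h]
      map_smul' := by intro c a; funext i; by_cases h : i ∈ R <;> simp [h] }
  let D := Submodule.map P C
  -- D injects into functions on R \ S, so finrank D ≤ |R| - t
  let g : D →ₗ[F] ({ i // i ∈ R \ S } → F) :=
    { toFun := fun y j => (y : Fin n → F) j.1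
      map_add' := by intro a b; rfl
      map_smul' := by intro c a; rfl }
  have hg : Function.Injective g := by
    rw [injective_iff_map_eq_zero]
    rintro ⟨y, hy⟩ hgy
    obtain ⟨x, hxC, hPx⟩ := hy
    subst hPx
    have hfil : (R.filter fun i => x i ≠ 0) ⊆ S := by
      intro i hi
      rw [Finset.mem_filter] at hi
      by_contra hiS
      have hmem : i ∈ R \ S := Finset.mem_sdiff.mpr ⟨hi.1, hiS⟩
      have := congrFun hgy ⟨i, hmem⟩
      simp only [g, P, LinearMap.coe_mk, AddHom.coe_mk, Pi.zero_apply, hi.1, if_pos] at this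
      exact hi.2 this
    have hle : (R.filter fun i => x i ≠ 0).card ≤ t := by
      have := Finset.card_le_card hfil
      omega
    have hzero : ∀ i ∈ R, x i = 0 := hvan x hxC hle
    apply Subtype.ext
    funext i
    simp only [P, LinearMap.coe_mk, AddHom.coe_mk, Submodule.coe_zero, Pi.zero_apply]
    by_cases h : i ∈ R
    · simp [h, hzero i h]
    · simp [h]
  have hD : Module.finrank F D ≤ R.card - t := by
    have h1 := LinearMap.finrank_le_finrank_of_injective hg
    rw [Module.finrank_fintype_fun_eq_card, Fintype.card_coe, Finset.card_sdiff_of_subset hSR,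
      hScard] at h1
    exact h1
  -- the pairing map from functions on R to the dual of D
  let f : ({ i // i ∈ R } → F) →ₗ[F] Module.Dual F D :=
    { toFun := fun u =>
        { toFun := fun y => ∑ j : { i // i ∈ R }, (y : Fin n → F) j.1 * u j
          map_add' := by
            intro a b
            simp [add_mul, Finset.sum_add_distrib]
          map_smul' := by
            intro c a
            simp [Finset.mul_sum, mul_assoc] }
      map_add' := by
        intro a b
        apply LinearMap.ext
        intro y
        simp [mul_add, Finset.sum_add_distrib]
      map_smul' := by
        intro c a
        apply LinearMap.ext
        intro y
        simp only [LinearMap.coe_mk, AddHom.coe_mk, RingHom.id_apply, LinearMap.smul_apply,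
          smul_eq_mul, Finset.mul_sum]
        change ∑ j : { i // i ∈ R }, (y : Fin n → F) j.1 * (c • a) j =
          c * ∑ j : { i // i ∈ R }, (y : Fin n → F) j.1 * a j
        rw [Finset.mul_sum]
        exact Finset.sum_congr rfl fun j _ => by simp [smul_eq_mul]; ring }
  have hker : t ≤ Module.finrank F (LinearMap.ker f) := by
    have h1 := LinearMap.finrank_range_add_finrank_ker f
    have h2 : Module.finrank F (LinearMap.range f) ≤ Module.finrank F (Module.Dual F D) :=
      Submodule.finrank_le _
    have h3 : Module.finrank F (Module.Dual F D) = Module.finrank F D :=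
      Subspace.dual_finrank_eq
    have h4 : Module.finrank F ({ i // i ∈ R } → F) = R.card := by
      rw [Module.finrank_fintype_fun_eq_card, Fintype.card_coe]
    omega
  obtain ⟨K, hKle, hKfr⟩ := exists_submodule_finrank_eq_aux (LinearMap.ker f) t hker
  -- the extension-by-zero map
  let e : ({ i // i ∈ R } → F) →ₗ[F] (Fin n → F) :=
    { toFun := fun u i => if h : i ∈ R then u ⟨i, h⟩ else 0
      map_add' := by intro a b; funext i; by_cases h : i ∈ R <;> simp [h]
      map_smul' := by intro c a; funext i; by_cases h : i ∈ R <;> simp [h] }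
  have he : Function.Injective e := by
    intro u v huv
    funext j
    have := congrFun huv j.1
    simpa only [e, LinearMap.coe_mk, AddHom.coe_mk, j.2, dif_pos, Subtype.eta] using this
  let E := Submodule.map e K
  have hEfr : Module.finrank F E = t := by
    rw [← hKfr]
    exact (LinearEquiv.finrank_eq (Submodule.equivMapOfInjective e he K)).symm
  have hEle : E ≤ dualCode C := by
    rintro w ⟨u, huK, rfl⟩
    intro x hxC
    have hu : f u = 0 := hKle huK
    have hsum : ∑ i, x i * e u i = ∑ i ∈ R, x i * e u i := by
      symm
      apply Finset.sum_subset (Finset.subset_univ R)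
      intro i _ hiR'
      simp [e, hiR']
    rw [hsum]
    have hsum2 : ∑ i ∈ R, x i * e u i = ∑ j : { i // i ∈ R }, x j.1 * u j := by
      rw [← Finset.sum_attach R (fun i => x i * e u i)]
      apply Finset.sum_congr rfl
      intro j _
      simp [e, j.2]
    rw [hsum2]
    have hPx : P x ∈ D := ⟨x, hxC, rfl⟩
    have := congrFun (congrArg (fun φ : Module.Dual F D => φ.toFun) hu) ⟨P x, hPx⟩
    simp only [f, LinearMap.coe_mk, AddHom.coe_mk] at this
    rw [show (0 : Module.Dual F D).toFun ⟨P x, hPx⟩ = 0 from rfl] at this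
    calc ∑ j : { i // i ∈ R }, x j.1 * u j
        = ∑ j : { i // i ∈ R }, P x j.1 * u j := by
          apply Finset.sum_congr rfl
          intro j _
          simp [P, j.2]
      _ = 0 := this
  have hsupp : {i : Fin n | ∃ x ∈ E, x i ≠ 0} ⊆ (R : Set (Fin n)) := by
    rintro i ⟨w, ⟨u, -, rfl⟩, hwi⟩
    by_contra hiR'
    rw [Finset.mem_coe] at hiR'
    exact hwi (by simp [e, hiR'])
  have hghw : ghw t (dualCode C) ≤ {i : Fin n | ∃ x ∈ E, x i ≠ 0}.ncard :=
    Nat.sInf_le ⟨E, hEle, hEfr, rfl⟩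
  have hncard : {i : Fin n | ∃ x ∈ E, x i ≠ 0}.ncard ≤ R.card := by
    have := Set.ncard_le_ncard hsupp (R : Set (Fin n)).toFinite
    rwa [Set.ncard_coe_finset] at this
  have hfin : ghw t (dualCode C) ≤ ρ + 1 := le_trans hghw (le_trans hncard hcard)
  exact Nat.sub_le_iff_le_add.mpr hfin
end

section
/- If a linear [n,k,d] code C has locality (r,δ) with δ ≥ 2, then r + δ ≥ d_{δ−1}(C⊥) + 1, where d_{δ−1}(C⊥) is the (δ−1)-th generalized Hamming weight of the dual code. -/
section aux
variable {F : Type*} [Field F]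

/-- Restriction to coordinates in a finset, as a linear map. -/
def resL {ι : Type*} (R : Finset ι) : (ι → F) →ₗ[F] (↥R → F) where
  toFun x := fun j => x j
  map_add' := fun _ _ => rfl
  map_smul' := fun _ _ => rfl

/-- Extension by zero from coordinates in a finset, as a linear map. -/
def extL {ι : Type*} [DecidableEq ι] (R : Finset ι) : (↥R → F) →ₗ[F] (ι → F) where
  toFun v := fun i => if h : i ∈ R then v ⟨i, h⟩ else 0
  map_add' := by intro v w; funext i; by_cases h : i ∈ R <;> simp [h]
  map_smul' := by intro c v; funext i; by_cases h : i ∈ R <;> simp [h]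

/-- The pairing of a vector with elements of a submodule `P`. -/
def pairL {ι : Type*} [Fintype ι] (P : Submodule F (ι → F)) :
    (ι → F) →ₗ[F] Module.Dual F ↥P where
  toFun w :=
    { toFun := fun p => ∑ j, (p : ι → F) j * w j
      map_add' := by intro p q; simp [add_mul, Finset.sum_add_distrib]
      map_smul' := by
        intro c p
        simp only [Submodule.coe_smul, Pi.smul_apply, smul_eq_mul, RingHom.id_apply,
          Finset.mul_sum]
        exact Finset.sum_congr rfl fun j _ => by ring }
  map_add' := by intro w w'; ext p; simp [mul_add, Finset.sum_add_distrib]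
  map_smul' := by
    intro c w
    ext p
    simp only [LinearMap.coe_mk, AddHom.coe_mk, RingHom.id_apply, LinearMap.smul_apply,
      Pi.smul_apply, smul_eq_mul, Finset.mul_sum]
    exact Finset.sum_congr rfl fun j _ => by ring

lemma extL_injective {ι : Type*} [DecidableEq ι] (R : Finset ι) :
    Function.Injective (extL (F := F) R) := by
  intro v w h
  funext j
  have := congrFun h j.1
  simpa [extL, j.2] using this

end aux

/-- If a linear code `C` has locality `(r, δ)` with `δ ≥ 2`, then
`r + δ ≥ d_{δ−1}(C⊥) + 1`. -/
theorem stmt3 {F : Type*} [Field F] [DecidableEq F] {n : ℕ}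
    (C : Submodule F (Fin n → F)) (r δ : ℕ) (hδ : 2 ≤ δ)
    (hloc : ∀ i : Fin n, ∃ R : Finset (Fin n), i ∈ R ∧ R.card ≤ r + δ - 1 ∧
      δ ≤ punctMinDist C R) :
    ghw (δ - 1) (dualCode C) + 1 ≤ r + δ := by
  rcases Nat.eq_zero_or_pos n with hn | hn
  · -- trivial case n = 0
    subst hn
    have hempty : {m | ∃ E : Submodule F (Fin 0 → F), E ≤ dualCode C ∧
        Module.finrank F E = δ - 1 ∧ {i : Fin 0 | ∃ x ∈ E, x i ≠ 0}.ncard = m} = ∅ := by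
      ext m
      simp only [Set.mem_setOf_eq, Set.mem_empty_iff_false, iff_false, not_exists]
      rintro E ⟨-, hrk, -⟩
      have : Subsingleton (Fin 0 → F) := ⟨fun a b => funext fun i => i.elim0⟩
      have : Module.finrank F E = 0 := by
        have : Subsingleton E := ⟨fun a b => Subtype.ext (Subsingleton.elim _ _)⟩
        exact Module.finrank_zero_of_subsingleton
      omega
    rw [ghw, hempty, Nat.sInf_empty]
    omega
  · obtain ⟨R, hiR, hcard, hdist⟩ := hloc ⟨0, hn⟩
    -- every codeword touching R has at least δ nonzero coordinates in R
    have hmem : ∀ x ∈ C, (∃ i ∈ R, x i ≠ 0) → δ ≤ (R.filter fun i => x i ≠ 0).card := by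
      intro x hx h
      exact le_trans hdist (Nat.sInf_le ⟨x, hx, h, rfl⟩)
    -- R has at least δ elements
    have hRδ : δ ≤ R.card := by
      have hne : { w | ∃ x ∈ C, (∃ i ∈ R, x i ≠ 0) ∧
          (R.filter fun i => x i ≠ 0).card = w }.Nonempty := by
        by_contra h
        rw [Set.not_nonempty_iff_eq_empty] at h
        rw [punctMinDist, h, Nat.sInf_empty] at hdist
        omega
      obtain ⟨w, x, hx, hxR, hw⟩ := hne
      exact le_trans (hmem x hx hxR) (Finset.card_filter_le _ _)
    classical
    set P' : Submodule F (↥R → F) := C.map (resL R) with hP'def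
    -- Singleton-type bound on the punctured code
    have hP' : Module.finrank F ↥P' + (δ - 1) ≤ R.card := by
      obtain ⟨S, -, hScard⟩ := Finset.exists_subset_card_eq (s := (Finset.univ : Finset ↥R))
        (n := R.card - (δ - 1)) (by simp only [Finset.card_univ, Fintype.card_coe]; omega)
      set f : ↥P' →ₗ[F] (↥S → F) := (resL S).comp P'.subtype with hfdef
      have hfinj : Function.Injective f := by
        rw [← LinearMap.ker_eq_bot, LinearMap.ker_eq_bot']
        intro p hp
        ext1
        by_contra hp0
        obtain ⟨x, hx, hxp⟩ := p.2
        have hx0 : ∃ i ∈ R, x i ≠ 0 := by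
          by_contra h
          push_neg at h
          apply hp0
          rw [← hxp]
          funext j
          exact h j.1 j.2
        have hge : δ ≤ (R.filter fun i => x i ≠ 0).card := hmem x hx hx0
        -- nonzero coordinates of p.1 avoid S
        have hTsub : (Finset.univ.filter fun j : ↥R => (p : ↥R → F) j ≠ 0) ⊆
            Finset.univ \ S := by
          intro j hj
          simp only [Finset.mem_filter] at hj
          simp only [Finset.mem_sdiff, Finset.mem_univ, true_and]
          intro hjS
          exact hj.2 (congrFun hp ⟨j, hjS⟩)
        have hTcard : (Finset.univ.filter fun j : ↥R => (p : ↥R → F) j ≠ 0).card ≤ δ - 1 := by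
          have := Finset.card_le_card hTsub
          rw [Finset.card_sdiff_of_subset (Finset.subset_univ S)] at this
          simp only [Finset.card_univ, Fintype.card_coe] at this
          omega
        -- the filter over R equals the filter over the subtype
        have hcards : (R.filter fun i => x i ≠ 0).card =
            (Finset.univ.filter fun j : ↥R => (p : ↥R → F) j ≠ 0).card := by
          have hco : ∀ j : ↥R, (p : ↥R → F) j = x j.1 := by
            intro j; rw [← hxp]; rfl
          rw [Finset.univ_eq_attach]
          have : (R.attach.filter fun j : ↥R => (p : ↥R → F) j ≠ 0) =
              (R.attach.filter fun j : ↥R => x j.1 ≠ 0) := by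
            apply Finset.filter_congr
            intro j _
            simp [hco j]
          rw [this]
          symm
          apply Finset.card_bij (fun (j : ↥R) _ => (j : Fin n))
          · intro j hj
            simp only [Finset.mem_filter] at hj ⊢
            exact ⟨j.2, hj.2⟩
          · intro a ha b hb hab
            exact Subtype.ext hab
          · intro i hi
            simp only [Finset.mem_filter] at hi
            exact ⟨⟨i, hi.1⟩, by simp [Finset.mem_filter, hi.2], rfl⟩
        omega
      have h1 : Module.finrank F ↥P' = Module.finrank F ↥(LinearMap.range f) :=
        (LinearEquiv.ofInjective f hfinj).finrank_eq
      have h2 : Module.finrank F ↥(LinearMap.range f) ≤ Module.finrank F (↥S → F) :=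
        Submodule.finrank_le _
      have h3 : Module.finrank F (↥S → F) = S.card := by
        rw [Module.finrank_pi]; exact Fintype.card_coe _
      omega
    -- the kernel of the pairing with P' has dimension ≥ δ - 1
    set Ψ : (↥R → F) →ₗ[F] Module.Dual F ↥P' := pairL P' with hΨdef
    have hker : δ - 1 ≤ Module.finrank F ↥(LinearMap.ker Ψ) := by
      have hrn := LinearMap.finrank_range_add_finrank_ker Ψ
      have hdom : Module.finrank F (↥R → F) = R.card := by
        rw [Module.finrank_pi]; exact Fintype.card_coe _
      have hrange : Module.finrank F ↥(LinearMap.range Ψ) ≤ Module.finrank F ↥P' := by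
        have := Submodule.finrank_le (LinearMap.range Ψ)
        rwa [Subspace.dual_finrank_eq] at this
      rw [hdom] at hrn
      omega
    -- push the kernel into the ambient space
    set W : Submodule F (Fin n → F) := (LinearMap.ker Ψ).map (extL R) with hWdef
    have hWrank : δ - 1 ≤ Module.finrank F ↥W := by
      rw [hWdef]
      have := (Submodule.equivMapOfInjective (extL R) (extL_injective R)
        (LinearMap.ker Ψ)).finrank_eq
      omega
    -- every element of W is in the dual code and supported on R
    have hWsupp : ∀ w ∈ W, ∀ i, i ∉ R → w i = 0 := by
      rintro w ⟨v, -, rfl⟩ i hi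
      simp [extL, hi]
    have hWdual : W ≤ dualCode C := by
      rintro w ⟨v, hv, rfl⟩
      intro x hx
      have step1 : ∑ i, x i * extL R v i = ∑ i ∈ R, x i * extL R v i := by
        refine (Finset.sum_subset (Finset.subset_univ R) ?_).symm
        intro i _ hiR'
        simp [extL, hiR']
      have step2 : ∑ i ∈ R, x i * extL R v i = ∑ j : ↥R, x j.1 * v j := by
        rw [← Finset.sum_attach R (fun i => x i * extL R v i)]
        rw [Finset.univ_eq_attach]
        refine Finset.sum_congr rfl fun j _ => ?_
        simp [extL, j.2]
      have hv' : ∀ p : ↥P', ∑ j, (p : ↥R → F) j * v j = 0 := by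
        intro p
        have := LinearMap.congr_fun hv p
        simpa [hΨdef, pairL] using this
      have := hv' ⟨resL R x, ⟨x, hx, rfl⟩⟩
      rw [step1, step2]
      simpa [resL] using this
    -- choose δ-1 linearly independent vectors in W
    obtain ⟨s, hscard, hsli⟩ := exists_finset_linearIndependent_of_le_finrank hWrank
    have hbli : LinearIndependent F
        (fun j : {x // x ∈ s} => ((j : ↥W) : Fin n → F)) :=
      hsli.map' W.subtype (Submodule.ker_subtype W)
    set E : Submodule F (Fin n → F) :=
      Submodule.span F (Set.range fun j : {x // x ∈ s} => ((j : ↥W) : Fin n → F)) with hEdef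
    have hEW : E ≤ W := by
      rw [hEdef, Submodule.span_le]
      rintro _ ⟨j, rfl⟩
      exact ((j : ↥W)).2
    have hEdual : E ≤ dualCode C := le_trans hEW hWdual
    have hErank : Module.finrank F ↥E = δ - 1 := by
      rw [hEdef, finrank_span_eq_card hbli, Fintype.card_coe, hscard]
    have hsupp : {i : Fin n | ∃ x ∈ E, x i ≠ 0} ⊆ (↑R : Set (Fin n)) := by
      intro i hi
      obtain ⟨x, hxE, hxi⟩ := hi
      by_contra hiR'
      exact hxi (hWsupp x (hEW hxE) i hiR')
    have hncard : {i : Fin n | ∃ x ∈ E, x i ≠ 0}.ncard ≤ R.card := by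
      have := Set.ncard_le_ncard hsupp (R : Set (Fin n)).toFinite
      rwa [Set.ncard_coe_finset] at this
    have hghw : ghw (δ - 1) (dualCode C) ≤ {i : Fin n | ∃ x ∈ E, x i ≠ 0}.ncard := by
      unfold ghw
      apply Nat.sInf_le
      exact Set.mem_setOf_eq ▸ ⟨E, hEdual, hErank, rfl⟩
    have h1 : ghw (δ - 1) (dualCode C) ≤ r + δ - 1 :=
      le_trans hghw (le_trans hncard hcard)
    have hδ1 : 1 ≤ r + δ := le_trans (le_trans one_le_two hδ) (Nat.le_add_left δ r)
    exact (Nat.sub_add_cancel hδ1) ▸ Nat.add_le_add_right h1 1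
end

section
/- Let C be a linear code of length n over F_q and R̄ a set of coordinates such that the punctured code C[R̄] has minimum distance ≥ t+1. Then the shortened dual code C⊥[[R̄]] = {w_{R̄} : w ∈ C⊥, supp(w) ⊆ R̄} has dimension ≥ t, and consequently #R̄ ≥ d_t(C⊥). -/
/-- The subspace of vectors supported in `R`. -/
def suppIn {F : Type*} [Field F] {n : ℕ} (R : Finset (Fin n)) : Submodule F (Fin n → F) where
  carrier := { w | ∀ j ∉ R, w j = 0 }
  add_mem' := by intro a b ha hb j hj; simp [ha j hj, hb j hj]
  zero_mem' := by intro j hj; rfl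
  smul_mem' := by intro c w hw j hj; simp [hw j hj]

open Module

theorem finrank_add_le_card_of_lt_hammingNorm {K ι : Type*} [Field K] [Fintype ι]
    [DecidableEq K] (W : Submodule K (ι → K)) {t : ℕ} (ht : t ≤ Fintype.card ι)
    (hW : ∀ w ∈ W, w ≠ 0 → t < hammingNorm w) :
    finrank K W + t ≤ Fintype.card ι := by
  classical
  obtain ⟨T, -, hT⟩ := Finset.exists_subset_card_eq (s := Finset.univ) ht
  -- a nonzero codeword has more than `t = #T` nonzero entries, so it cannot vanish off `T`
  have hinj : Function.Injective ((LinearMap.funLeft K K ((↑) : ↥Tᶜ → ι)).comp W.subtype) := by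
    rw [← LinearMap.ker_eq_bot, LinearMap.ker_eq_bot']
    rintro ⟨w, hw⟩ hzero
    by_contra hne
    have hsupp : (Finset.univ.filter fun i => w i ≠ 0) ⊆ T := by
      intro i hi
      by_contra hiT
      exact (Finset.mem_filter.mp hi).2 (congrFun hzero ⟨i, Finset.mem_compl.mpr hiT⟩)
    have hlt := hW w hw fun h => hne (Subtype.ext h)
    have hle := Finset.card_le_card hsupp
    rw [hammingNorm] at hlt
    omega
  have := LinearMap.finrank_le_finrank_of_injective hinj
  rw [finrank_fintype_fun_eq_card, Fintype.card_coe, Finset.card_compl, hT] at this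
  omega

theorem finrank_le_finrank_add_finrank_ker_compl₂ {K U V : Type*} [Field K] [AddCommGroup U]
    [Module K U] [AddCommGroup V] [Module K V] [FiniteDimensional K U]
    (B : U →ₗ[K] V →ₗ[K] K) (W : Submodule K V) [FiniteDimensional K W] :
    finrank K U ≤ finrank K W + finrank K (LinearMap.ker (B.compl₂ W.subtype)) := by
  rw [← LinearMap.finrank_range_add_finrank_ker (B.compl₂ W.subtype)]
  gcongr
  exact (Submodule.finrank_le _).trans Subspace.dual_finrank_eq.le

theorem Submodule.exists_le_finrank_eq {K V : Type*} [Field K] [AddCommGroup V] [Module K V]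
    (S : Submodule K V) {t : ℕ} (ht : t ≤ finrank K S) : ∃ E ≤ S, finrank K E = t := by
  obtain ⟨f, hf⟩ := exists_linearIndependent_of_le_finrank ht
  refine ⟨span K (Set.range (S.subtype ∘ f)), ?_, ?_⟩
  · exact span_le.mpr (Set.range_subset_iff.mpr fun i => (f i).2)
  · rw [finrank_span_eq_card (hf.map' S.subtype S.ker_subtype), Fintype.card_fin]

section Codes

variable {F : Type*} [Field F] {n : ℕ}

def puncture (R : Finset (Fin n)) (C : Submodule F (Fin n → F)) : Submodule F (R → F) :=
  C.map (LinearMap.funLeft F F (↑))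

theorem finrank_suppIn (R : Finset (Fin n)) : finrank F (suppIn (F := F) R) = R.card := by
  have hbij : Function.Bijective
      ((LinearMap.funLeft F F ((↑) : R → Fin n)).comp (suppIn (F := F) R).subtype) := by
    constructor
    · rintro ⟨w, hw⟩ ⟨v, hv⟩ hwv
      ext j
      by_cases hj : j ∈ R
      · exact congrFun hwv ⟨j, hj⟩
      · simp [hw j hj, hv j hj]
    · intro f
      refine ⟨⟨fun j => if h : j ∈ R then f ⟨j, h⟩ else 0, fun j hj => dif_neg hj⟩, ?_⟩
      funext i
      simp [LinearMap.funLeft]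
  rw [(LinearEquiv.ofBijective _ hbij).finrank_eq, finrank_fintype_fun_eq_card, Fintype.card_coe]

theorem sum_mul_eq_dotProduct_restrict {R : Finset (Fin n)} {u : Fin n → F} (hu : u ∈ suppIn R)
    (x : Fin n → F) : ∑ i, x i * u i = (fun i : R => u i) ⬝ᵥ (fun i : R => x i) := by
  rw [dotProduct, Finset.sum_coe_sort R fun i => u i * x i]
  refine (Finset.sum_subset (Finset.subset_univ R) fun i _ hi => ?_).symm.trans ?_
  · rw [hu i hi, mul_zero]
  · simp only [mul_comm]

theorem card_le_finrank_puncture_add_finrank_inf_suppIn (C : Submodule F (Fin n → F))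
    (R : Finset (Fin n)) :
    R.card ≤ finrank F (puncture R C) + finrank F (dualCode C ⊓ suppIn R : Submodule F _) := by
  -- `C[R̄]⊥ = C⊥[[R̄]]`: the kernel of this pairing, embedded in `F^n`, is the shortened dual code
  let B : suppIn (F := F) R →ₗ[F] (R → F) →ₗ[F] F :=
    (dotProductBilin F F).comp ((LinearMap.funLeft F F (↑)).comp (suppIn R).subtype)
  let K := LinearMap.ker (B.compl₂ (puncture R C).subtype)
  have hK : K.map (suppIn R).subtype ≤ dualCode C ⊓ suppIn R := by
    rintro _ ⟨u, hu, rfl⟩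
    refine ⟨fun x hx => ?_, u.2⟩
    rw [Submodule.subtype_apply, sum_mul_eq_dotProduct_restrict u.2]
    exact LinearMap.congr_fun hu ⟨_, x, hx, rfl⟩
  calc R.card = finrank F (suppIn (F := F) R) := (finrank_suppIn R).symm
    _ ≤ finrank F (puncture R C) + finrank F K :=
      finrank_le_finrank_add_finrank_ker_compl₂ B _
    _ ≤ _ := by
      gcongr
      rw [← Submodule.finrank_map_subtype_eq]
      exact Submodule.finrank_mono hK

theorem ghw_le_card {D : Submodule F (Fin n → F)} {R : Finset (Fin n)} {t : ℕ}
    (ht : t ≤ finrank F (D ⊓ suppIn R : Submodule F (Fin n → F))) : ghw t D ≤ R.card := by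
  obtain ⟨E, hE, hEt⟩ := Submodule.exists_le_finrank_eq _ ht
  have hsupp : {i : Fin n | ∃ x ∈ E, x i ≠ 0} ⊆ R := by
    rintro i ⟨x, hxE, hxi⟩
    by_contra hiR
    exact hxi ((hE hxE).2 i hiR)
  calc ghw t D ≤ {i : Fin n | ∃ x ∈ E, x i ≠ 0}.ncard :=
        Nat.sInf_le ⟨E, hE.trans inf_le_left, hEt, rfl⟩
    _ ≤ (R : Set (Fin n)).ncard := Set.ncard_le_ncard hsupp
    _ = R.card := Set.ncard_coe_finset R

variable [DecidableEq F]

theorem hammingNorm_restrict (R : Finset (Fin n)) (x : Fin n → F) :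
    hammingNorm (fun i : R => x i) = (R.filter fun i => x i ≠ 0).card := by
  rw [hammingNorm, Finset.card_filter, Finset.card_filter]
  exact Finset.sum_coe_sort R fun i => if x i ≠ 0 then 1 else 0

theorem punctMinDist_le_card_filter {C : Submodule F (Fin n → F)} {R : Finset (Fin n)}
    {x : Fin n → F} (hx : x ∈ C) (hxR : ∃ i ∈ R, x i ≠ 0) :
    punctMinDist C R ≤ (R.filter fun i => x i ≠ 0).card :=
  Nat.sInf_le ⟨x, hx, hxR, rfl⟩

theorem punctMinDist_le_card (C : Submodule F (Fin n → F)) (R : Finset (Fin n)) :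
    punctMinDist C R ≤ R.card := by
  rcases Nat.eq_zero_or_pos (punctMinDist C R) with h | h
  · omega
  · obtain ⟨_, x, hx, hxR, rfl⟩ := Nat.nonempty_of_pos_sInf h
    exact (punctMinDist_le_card_filter hx hxR).trans (Finset.card_filter_le _ _)

theorem lt_hammingNorm_of_mem_puncture {C : Submodule F (Fin n → F)} {R : Finset (Fin n)}
    {t : ℕ} (h : t < punctMinDist C R) {p : R → F} (hp : p ∈ puncture R C) (hp0 : p ≠ 0) :
    t < hammingNorm p := by
  obtain ⟨x, hx, rfl⟩ := hp
  obtain ⟨⟨i, hi⟩, hxi⟩ := Function.ne_iff.mp hp0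
  change t < hammingNorm fun i : R => x i
  rw [hammingNorm_restrict]
  exact h.trans_le (punctMinDist_le_card_filter hx ⟨i, hi, hxi⟩)

end Codes

/-- If `d(C[R̄]) ≥ t + 1`, then the shortened dual code `C⊥[[R̄]]`
has dimension `≥ t`, and consequently `#R̄ ≥ d_t(C⊥)`. -/
theorem stmt4 {F : Type*} [Field F] [DecidableEq F] {n : ℕ}
    (C : Submodule F (Fin n → F)) (R : Finset (Fin n)) (t : ℕ)
    (h : t + 1 ≤ punctMinDist C R) :
    t ≤ Module.finrank F ↥(dualCode C ⊓ suppIn R) ∧ ghw t (dualCode C) ≤ R.card := by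
  have ht : t ≤ Fintype.card R := by
    simpa using Nat.le_of_succ_le (h.trans (punctMinDist_le_card C R))
  have hSingleton : finrank F (puncture R C) + t ≤ R.card := by
    simpa using finrank_add_le_card_of_lt_hammingNorm (puncture R C) ht
      fun p hp hp0 => lt_hammingNorm_of_mem_puncture h hp hp0
  have hdim : t ≤ finrank F ↥(dualCode C ⊓ suppIn R) := by
    have := card_le_finrank_puncture_add_finrank_inf_suppIn C R
    omega
  exact ⟨hdim, ghw_le_card hdim⟩
end

section
/- Let D be a linear code over F_Q and q a power dividing Q such that F_q ⊆ F_Q, and let C = D ∩ F_q^n be the subfield-subcode. Then C⊥ = Tr(D⊥), where Tr is the coordinatewise trace map of the extension F_Q/F_q and the first dual is taken over F_q while D⊥ is taken over F_Q (Delsarte's theorem). -/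
/-!
For `w : ι → K` and `x : ι → F` one has `Tr w ⬝ᵥ x = Tr (w ⬝ᵥ x)`. As `D⊥` is closed under
scaling by `K` and the trace form of a finite separable extension is nondegenerate, `x` is
orthogonal to `Tr(D⊥)` iff it is orthogonal to `D⊥`, i.e. `Tr(D⊥)⊥ = D⊥⊥ ∩ Fⁿ = C`.
Dualizing once more gives `C⊥ = Tr(D⊥)`.
-/

open LinearMap (BilinForm)

namespace Submodule

section DualCode

variable {ι R : Type*} [Fintype ι] [Field R]

def dualCode (W : Submodule R (ι → R)) : Submodule R (ι → R) :=
  BilinForm.orthogonal (dotProductBilin R R) W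

theorem mem_dualCode {W : Submodule R (ι → R)} {y : ι → R} :
    y ∈ W.dualCode ↔ ∀ x ∈ W, x ⬝ᵥ y = 0 :=
  BilinForm.mem_orthogonal_iff

theorem dualCode_dualCode (W : Submodule R (ι → R)) : W.dualCode.dualCode = W := by
  classical
  have toBilin'_one : Matrix.toBilin' (1 : Matrix ι ι R) = dotProductBilin R R :=
    LinearMap.ext₂ fun x y => by simp [Matrix.toBilin'_apply']
  refine BilinForm.orthogonal_orthogonal (B := dotProductBilin R R) ?_ (fun x y h => ?_) W
  · rw [← toBilin'_one]
    exact (Matrix.nondegenerate_of_det_ne_zero (by simp)).toBilin'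
  · simpa [dotProduct_comm] using h

end DualCode

section SubfieldSubcode

variable {ι : Type*} (F : Type*) {K : Type*} [Field F] [Field K] [Algebra F K]

def subfieldSubcode (D : Submodule K (ι → K)) : Submodule F (ι → F) :=
  (D.restrictScalars F).comap ((Algebra.linearMap F K).compLeft ι)

noncomputable def traceCode (D : Submodule K (ι → K)) : Submodule F (ι → F) :=
  (D.restrictScalars F).map ((Algebra.trace F K).compLeft ι)

variable {F}

theorem mem_subfieldSubcode {D : Submodule K (ι → K)} {x : ι → F} :
    x ∈ D.subfieldSubcode F ↔ (fun i => algebraMap F K (x i)) ∈ D :=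
  Iff.rfl

theorem mem_traceCode {D : Submodule K (ι → K)} {y : ι → F} :
    y ∈ D.traceCode F ↔ ∃ w ∈ D, (fun i => Algebra.trace F K (w i)) = y :=
  Iff.rfl

end SubfieldSubcode

end Submodule

theorem Algebra.trace_dotProduct_algebraMap {ι : Type*} [Fintype ι] (F : Type*) {K : Type*}
    [Field F] [Field K] [Algebra F K] (w : ι → K) (x : ι → F) :
    Algebra.trace F K (w ⬝ᵥ fun i => algebraMap F K (x i)) =
      (fun i => Algebra.trace F K (w i)) ⬝ᵥ x := by
  simp only [dotProduct, map_sum, mul_comm (w _), ← Algebra.smul_def, map_smul, smul_eq_mul,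
    mul_comm (x _)]

namespace Submodule

variable {ι F K : Type*} [Fintype ι] [Field F] [Field K] [Algebra F K]
  [FiniteDimensional F K] [Algebra.IsSeparable F K]

theorem dualCode_traceCode (W : Submodule K (ι → K)) :
    (W.traceCode F).dualCode = W.dualCode.subfieldSubcode F := by
  ext x
  simp only [mem_dualCode, mem_subfieldSubcode, mem_traceCode, forall_exists_index, and_imp,
    forall_apply_eq_imp_iff₂, ← Algebra.trace_dotProduct_algebraMap]
  refine ⟨fun h w hw => (traceForm_nondegenerate F K).1 _ fun c => ?_,
    fun h w hw => by rw [h w hw, map_zero]⟩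
  simpa [Algebra.traceForm_apply, smul_dotProduct, mul_comm] using h (c • w) (W.smul_mem c hw)

theorem dualCode_subfieldSubcode (D : Submodule K (ι → K)) :
    (D.subfieldSubcode F).dualCode = D.dualCode.traceCode F := by
  rw [← dualCode_dualCode (D.dualCode.traceCode F), dualCode_traceCode, dualCode_dualCode]

end Submodule

theorem stmt12_general {F K : Type*} [Field F] [Field K] [Algebra F K] [Fintype K]
    {n : ℕ} (D : Submodule K (Fin n → K)) :
    {y : Fin n → F | ∀ x : Fin n → F, (fun j => algebraMap F K (x j)) ∈ D →
        ∑ j, x j * y j = 0} =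
      (fun w : Fin n → K => fun j => Algebra.trace F K (w j)) ''
        {w : Fin n → K | ∀ x ∈ D, ∑ j, x j * w j = 0} := by
  ext y
  simpa [Submodule.mem_dualCode, Submodule.mem_subfieldSubcode, Submodule.mem_traceCode,
    dotProduct] using SetLike.ext_iff.mp (D.dualCode_subfieldSubcode (F := F)) y

/-- **Delsarte.** For a linear code `D` over `F_Q` with subfield-subcode
`C = D ∩ F_q^n`, one has `C⊥ = Tr(D⊥)`, where the first dual is over `F_q`, `D⊥` over
`F_Q`, and `Tr` is the coordinatewise trace of `F_Q/F_q`. -/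
theorem stmt12 {F K : Type*} [Field F] [Field K] [Algebra F K] [Fintype F] [Fintype K]
    {n : ℕ} (D : Submodule K (Fin n → K)) :
    {y : Fin n → F | ∀ x : Fin n → F, (fun j => algebraMap F K (x j)) ∈ D →
        ∑ j, x j * y j = 0} =
      (fun w : Fin n → K => fun j => Algebra.trace F K (w j)) ''
        {w : Fin n → K | ∀ x ∈ D, ∑ j, x j * w j = 0} :=
  stmt12_general D
end
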